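/- Every principal ideal of DMV_n is an intersection of maximal ideals of DMV_n; equivalently, for every f ∈ DMV_n, the ideal J = (f] satisfies J = I(V(J)). -/

import Mathlib

open scoped BigOperators

/-- The unit cube `[0,1]^n` in `ℝ^n`. -/
def Cube (n : ℕ) : Set (Fin n → ℝ) := {x | ∀ i, 0 ≤ x i ∧ x i ≤ 1}

/-- Elements of the free `n`-generated DMV-algebra `DMV_n`: continuous
`[0,1]`-valued functions on the cube that are piecewise linear with rational
coefficients, i.e. there are finitely many affine functions with rational
coefficients such that at every point `f` agrees with one of them. -/
def IsPWLQ {n : ℕ} (f : Cube n → ℝ) : Prop :=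
  Continuous f ∧ (∀ x, 0 ≤ f x ∧ f x ≤ 1) ∧
  ∃ (k : ℕ) (c : Fin k → ℚ) (a : Fin k → Fin n → ℚ),
    ∀ x : Cube n, ∃ j, f x = (c j : ℝ) + ∑ i, (a j i : ℝ) * (x : Fin n → ℝ) i

/-- Elements of the free `n`-generated MV-algebra `MV_n`: continuous
`[0,1]`-valued functions on the cube that are piecewise linear with integer
coefficients. -/
def IsPWLZ {n : ℕ} (f : Cube n → ℝ) : Prop :=
  Continuous f ∧ (∀ x, 0 ≤ f x ∧ f x ≤ 1) ∧
  ∃ (k : ℕ) (c : Fin k → ℤ) (a : Fin k → Fin n → ℤ),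
    ∀ x : Cube n, ∃ j, f x = (c j : ℝ) + ∑ i, (a j i : ℝ) * (x : Fin n → ℝ) i

/-- Ideal of `DMV_n`: a set of elements of `DMV_n` containing `0`, downward closed,
and closed under the pointwise truncated sum `f ⊕ g = min (f + g) 1`. -/
def IsIdealQ {n : ℕ} (J : Set (Cube n → ℝ)) : Prop :=
  (∀ f ∈ J, IsPWLQ f) ∧ ((fun _ => (0 : ℝ)) ∈ J) ∧
  (∀ f ∈ J, ∀ g : Cube n → ℝ, IsPWLQ g → (∀ x, g x ≤ f x) → g ∈ J) ∧
  (∀ f ∈ J, ∀ g ∈ J, (fun x => min (f x + g x) 1) ∈ J)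

/-- `g` belongs to the ideal `(f]` of `DMV_n` generated by `f`. -/
def memGen {n : ℕ} (f g : Cube n → ℝ) : Prop :=
  ∀ J : Set (Cube n → ℝ), IsIdealQ J → f ∈ J → g ∈ J

/-- Maximal ideal of `DMV_n`: a proper ideal maximal under inclusion. -/
def IsMaxIdealQ {n : ℕ} (M : Set (Cube n → ℝ)) : Prop :=
  IsIdealQ M ∧ (∃ g : Cube n → ℝ, IsPWLQ g ∧ g ∉ M) ∧
  ∀ J : Set (Cube n → ℝ), IsIdealQ J → (∃ g : Cube n → ℝ, IsPWLQ g ∧ g ∉ J) →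
    M ⊆ J → J = M

/-!
The ideal `(f]` consists of the `g ∈ DMV_n` with `g ≤ m f` for some natural `m`, and every point
`x` of the cube gives the maximal ideal of functions vanishing at `x`. So everything comes down to
a Łojasiewicz inequality for piecewise linear functions: if `g` vanishes wherever `f` does, then
`g ≤ m f` for some `m`.

To prove it, cut the cube into the finitely many convex polytopes on which the affine pieces of
`f` and `g` are totally ordered. On such a polytope `f` and `g` are single affine functions `A`
and `B`: sweeping along a segment shows that for any two points some piece lies above `f` at the
first and below `f` at the second. A polytope has finitely many extreme points, so one `m`
gives `B ≤ m A` at all of them, and by Krein–Milman on the whole polytope.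
-/

open Set AffineMap Filter Topology Pointwise

theorem exists_mem_and_nonempty_inter_of_mem_closure {X ι : Type*} [TopologicalSpace X]
    [Finite ι] {C : ι → Set X} (hC : ∀ i, IsClosed (C i)) {U : Set X} (hU : U ⊆ ⋃ i, C i)
    {x : X} (hx : x ∈ closure U) : ∃ i, x ∈ C i ∧ (C i ∩ U).Nonempty := by
  have hcover : U ⊆ ⋃ i, C i ∩ U := fun y hy => by
    obtain ⟨i, hi⟩ := mem_iUnion.1 (hU hy)
    exact mem_iUnion.2 ⟨i, hi, hy⟩
  have hx' := closure_mono hcover hx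
  rw [closure_iUnion_of_finite] at hx'
  obtain ⟨i, hi⟩ := mem_iUnion.1 hx'
  exact ⟨i, closure_minimal inter_subset_left (hC i) hi, closure_nonempty_iff.1 ⟨x, hi⟩⟩

theorem exists_affine_ge_left_le_right {ι : Type*} [Finite ι] {φ : ℝ → ℝ} (hφ : Continuous φ)
    (a b : ι → ℝ) (hsel : ∀ t ∈ Icc (0 : ℝ) 1, ∃ j, φ t = a j + b j * t) :
    ∃ j, φ 0 ≤ a j ∧ a j + b j ≤ φ 1 := by
  set T := {t ∈ Icc (0 : ℝ) 1 | ∃ j, φ 0 ≤ a j ∧ a j + b j * t ≤ φ t}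
  have hT0 : (0 : ℝ) ∈ T := by
    obtain ⟨j, hj⟩ := hsel 0 (left_mem_Icc.2 zero_le_one)
    exact ⟨left_mem_Icc.2 zero_le_one, j, by simp [hj]⟩
  have hTbdd : BddAbove T := ⟨1, fun t ht => ht.1.2⟩
  have hTclosed : IsClosed T := by
    have : T = ⋃ j, Icc 0 1 ∩ {_t | φ 0 ≤ a j} ∩ {t | a j + b j * t ≤ φ t} := by
      ext t; simp [T, and_assoc]
    rw [this]
    exact isClosed_iUnion_of_finite fun j => (isClosed_Icc.inter
      (isClosed_le continuous_const continuous_const)).inter (isClosed_le (by fun_prop) hφ)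
  set s := sSup T
  obtain ⟨⟨hs0, hs1⟩, j, hj0, hjs⟩ : s ∈ T := hTclosed.csSup_mem ⟨0, hT0⟩ hTbdd
  have hright : ∀ t ∈ Ioc s 1, ∀ i, φ 0 ≤ a i → φ t < a i + b i * t := fun t ht i hi => by
    by_contra! h
    exact (le_csSup hTbdd ⟨⟨hs0.trans ht.1.le, ht.2⟩, i, hi, h⟩).not_gt ht.1
  rcases hs1.eq_or_lt with h1 | h1
  · exact ⟨j, hj0, by simpa [h1] using hjs⟩
  -- Some piece `i` agrees with `φ` at `s` and somewhere right of `s`.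
  obtain ⟨i, his, t, hit, hst, ht1⟩ := exists_mem_and_nonempty_inter_of_mem_closure
    (C := fun i => {t | φ t = a i + b i * t}) (fun i => isClosed_eq hφ (by fun_prop))
    (fun t ht => mem_iUnion.2 (hsel t ⟨hs0.trans ht.1.le, ht.2⟩))
    (closure_Ioc h1.ne ▸ left_mem_Icc.2 h1.le)
  have hjt := hright t ⟨hst, ht1⟩ j hj0
  simp only [mem_ofPred_eq] at his hit
  -- `(a i + b i * u) - (a j + b j * u)` is `≥ 0` at `u = s` and `< 0` at `u = t > s`,
  -- hence `≥ 0` at `u = 0 ≤ s`.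
  have hij : a j ≤ a i := by nlinarith
  exact ((hright t ⟨hst, ht1⟩ i (hj0.trans hij)).ne hit).elim

section ContinuousSelection

variable {E : Type*} [AddCommGroup E] [Module ℝ E] [TopologicalSpace E] [IsTopologicalAddGroup E]
  [ContinuousSMul ℝ E]

theorem Convex.exists_affine_ge_le {K : Set E} (hK : Convex ℝ K) {f : K → ℝ} (hf : Continuous f)
    {ι : Type*} [Finite ι] (L : ι → E →ᵃ[ℝ] ℝ) (hL : ∀ x, ∃ j, f x = L j x) (x y : K) :
    ∃ j, f x ≤ L j x ∧ L j y ≤ f y := by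
  let γ : Icc (0 : ℝ) 1 → K := fun t =>
    ⟨lineMap (x : E) (y : E) (t : ℝ), hK.lineMap_mem x.2 y.2 t.2⟩
  have hγ : Continuous γ := by fun_prop
  have hγ0 : γ 0 = x := Subtype.ext (lineMap_apply_zero _ _)
  have hγ1 : γ 1 = y := Subtype.ext (lineMap_apply_one _ _)
  have hLγ : ∀ j t, L j (γ t) = L j x + (L j y - L j x) * t := fun j t => by
    simp [γ, apply_lineMap, lineMap_apply_ring', add_comm, mul_comm]
  obtain ⟨j, hj⟩ := exists_affine_ge_left_le_right ((hf.comp hγ).Icc_extend' (h := zero_le_one))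
    (fun j => L j x) (fun j => L j y - L j x) fun t ht => by
      obtain ⟨j, hj⟩ := hL (γ ⟨t, ht⟩)
      exact ⟨j, by simp [IccExtend_of_mem _ _ ht, hj, hLγ]⟩
  refine ⟨j, ?_, ?_⟩
  · simpa [IccExtend_left, hγ0] using hj.1
  · simpa [IccExtend_right, hγ1] using hj.2

theorem Convex.exists_eq_affine_on_of_total {K : Set E} (hK : Convex ℝ K) {f : K → ℝ}
    (hf : Continuous f) {ι : Type*} [Finite ι] (L : ι → E →ᵃ[ℝ] ℝ) (hL : ∀ x, ∃ j, f x = L j x)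
    {S : Set K} (hS : S.Nonempty)
    (htot : ∀ i j, (∀ z ∈ S, L i z ≤ L j z) ∨ ∀ z ∈ S, L j z ≤ L i z) :
    ∃ j, ∀ y ∈ S, f y = L j y := by
  let F : ι → S → ℝ := fun j z => L j z
  have hF : ∀ i j, F i ≤ F j ∨ F j ≤ F i := fun i j =>
    (htot i j).imp (fun h z => h z z.2) fun h z => h z z.2
  have hbelow : ∀ y ∈ S, ∃ j, (∀ z ∈ S, L j z ≤ f z) ∧ f y = L j y := by
    intro y hy
    obtain ⟨j₀, hj₀⟩ := hL y
    obtain ⟨j, hjy, hjmin⟩ :=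
      (toFinite {j | f y ≤ L j y}).exists_minimalFor F _ ⟨j₀, hj₀.le⟩
    have hj : ∀ z ∈ S, L j z ≤ f z := fun z hz => by
      obtain ⟨i, hiy, hiz⟩ := hK.exists_affine_ge_le hf L hL y z
      exact le_trans ((hF j i).elim id (hjmin hiy) ⟨z, hz⟩) hiz
    exact ⟨j, hj, le_antisymm hjy (hj y hy)⟩
  obtain ⟨y₀, hy₀⟩ := hS
  obtain ⟨j, hj, hjmax⟩ := (toFinite {j | ∀ z ∈ S, L j z ≤ f z}).exists_maximalFor F _
    (let ⟨i, hi, _⟩ := hbelow y₀ hy₀; ⟨i, hi⟩)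
  refine ⟨j, fun y hy => ?_⟩
  obtain ⟨i, hi, hiy⟩ := hbelow y hy
  exact le_antisymm (hiy.trans_le ((hF i j).elim id (hjmax hi) ⟨y, hy⟩)) (hj y hy)

end ContinuousSelection

section Polyhedron

variable {E : Type*} [AddCommGroup E] [Module ℝ E] {ι : Type*}

def polyhedron (D : ι → E →ᵃ[ℝ] ℝ) : Set E := ⋂ r, D r ⁻¹' Iic 0

variable {D : ι → E →ᵃ[ℝ] ℝ}

@[simp]
theorem mem_polyhedron {v : E} : v ∈ polyhedron D ↔ ∀ r, D r v ≤ 0 := by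
  simp [polyhedron]

theorem polyhedron_sumElim {κ : Type*} (D' : κ → E →ᵃ[ℝ] ℝ) :
    polyhedron (Sum.elim D D') = polyhedron D ∩ polyhedron D' := by
  ext v; simp [Sum.forall]

theorem convex_polyhedron (D : ι → E →ᵃ[ℝ] ℝ) : Convex ℝ (polyhedron D) :=
  convex_iInter fun r => (convex_Iic 0).affine_preimage (D r)

theorem finite_extremePoints_polyhedron [Finite ι] (D : ι → E →ᵃ[ℝ] ℝ) :
    ((polyhedron D).extremePoints ℝ).Finite := by
  -- An extreme point is determined by its set of active constraints.
  refine Finite.of_finite_image (f := fun v => {r | D r v = 0}) (toFinite _) ?_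
  intro v hv w hw hvw
  by_contra hne
  have hline : ∀ᶠ t in 𝓝 (0 : ℝ), lineMap v w t ∈ polyhedron D := by
    simp only [mem_polyhedron, apply_lineMap, lineMap_apply_ring', eventually_all]
    intro r
    by_cases hr : D r v = 0
    · have hw0 : D r w = 0 := (congrArg (r ∈ ·) hvw).mp hr
      simp [hr, hw0]
    · have hlt : D r v < 0 := (mem_polyhedron.1 hv.1 r).lt_of_ne hr
      have hcont : Continuous fun t : ℝ => t * (D r w - D r v) + D r v := by fun_prop
      filter_upwards [hcont.tendsto' 0 (D r v) (by simp) |>.eventually (gt_mem_nhds hlt)]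
        with t ht using ht.le
  obtain ⟨δ, hδ, hball⟩ := Metric.eventually_nhds_iff.1 hline
  have hδ' : dist (δ / 2) 0 < δ := by rw [Real.dist_0_eq_abs, abs_of_pos (by positivity)]; linarith
  have hδ'' : dist (-(δ / 2)) 0 < δ := by rwa [Real.dist_0_eq_abs, abs_neg, ← Real.dist_0_eq_abs]
  have hmid : v ∈ openSegment ℝ (lineMap v w (δ / 2)) (lineMap v w (-(δ / 2))) :=
    ⟨1 / 2, 1 / 2, by norm_num, by norm_num, by norm_num, by
      simp only [lineMap_apply_module']; module⟩
  have := hv.2 (hball hδ') (hball hδ'') hmid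
  rw [lineMap_apply_module', add_eq_right, smul_eq_zero, sub_eq_zero] at this
  exact hne (this.resolve_left (by positivity)).symm

end Polyhedron

def IsPiecewiseAffine {E : Type*} [AddCommGroup E] [Module ℝ E] [TopologicalSpace E] {K : Set E}
    (f : K → ℝ) : Prop :=
  Continuous f ∧ ∃ (k : ℕ) (L : Fin k → E →ᵃ[ℝ] ℝ), ∀ x, ∃ j, f x = L j x

theorem exists_nat_le_mul_of_forall_fiber {X T : Type*} [Finite T] (p : X → T) {f g : X → ℝ}
    (hf0 : ∀ x, 0 ≤ f x) (h : ∀ t, ∃ m : ℕ, ∀ x, p x = t → g x ≤ m * f x) :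
    ∃ m : ℕ, ∀ x, g x ≤ m * f x := by
  choose m hm using h
  obtain ⟨M, hM⟩ := (finite_range m).bddAbove
  refine ⟨M, fun x => (hm _ x rfl).trans ?_⟩
  gcongr
  · exact hf0 x
  · exact_mod_cast hM (mem_range_self _)

section NormedPolyhedron

variable {E : Type*} [NormedAddCommGroup E] [NormedSpace ℝ E] [FiniteDimensional ℝ E] {ι : Type*}
  {D : ι → E →ᵃ[ℝ] ℝ}

theorem isClosed_polyhedron (D : ι → E →ᵃ[ℝ] ℝ) : IsClosed (polyhedron D) :=
  isClosed_iInter fun r => isClosed_Iic.preimage (D r).continuous_of_finiteDimensional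

theorem exists_nat_le_mul_on_polyhedron [Finite ι] (hP : IsCompact (polyhedron D))
    {A B : E →ᵃ[ℝ] ℝ} (hA : ∀ v ∈ polyhedron D, 0 ≤ A v)
    (hAB : ∀ v ∈ polyhedron D, A v = 0 → B v ≤ 0) :
    ∃ m : ℕ, ∀ v ∈ polyhedron D, B v ≤ m * A v := by
  have hX := finite_extremePoints_polyhedron D
  set m := hX.toFinset.sup fun v => ⌈B v / A v⌉₊
  have hext : ∀ v ∈ (polyhedron D).extremePoints ℝ, B v ≤ m * A v := by
    intro v hv
    rcases (hA v hv.1).eq_or_lt with h | h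
    · rw [← h, mul_zero]
      exact hAB v hv.1 h.symm
    · calc B v = B v / A v * A v := by field_simp
        _ ≤ ⌈B v / A v⌉₊ * A v := by gcongr; exact Nat.le_ceil _
        _ ≤ m * A v := by
          gcongr
          exact_mod_cast Finset.le_sup (f := fun v => ⌈B v / A v⌉₊) (hX.mem_toFinset.2 hv)
  have hconv : Convex ℝ {v | B v ≤ m * A v} := by
    intro x hx y hy a b ha hb hab
    simp only [mem_ofPred_eq, Convex.combo_affine_apply hab, smul_eq_mul] at hx hy ⊢
    nlinarith
  have hclosed : IsClosed {v | B v ≤ m * A v} :=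
    isClosed_le B.continuous_of_finiteDimensional
      (continuous_const.mul A.continuous_of_finiteDimensional)
  refine ⟨m, fun v hv => ?_⟩
  rw [← closure_convexHull_extremePoints hP (convex_polyhedron D)] at hv
  exact closure_minimal (convexHull_min hext hconv) hclosed hv

theorem Convex.exists_nat_le_mul_on_polyhedron_of_total {K : Set E} (hK : Convex ℝ K)
    {f g : K → ℝ} (hf : Continuous f) (hg : Continuous g) {κ : Type*} [Finite κ]
    (L : κ → E →ᵃ[ℝ] ℝ) (hLf : ∀ x, ∃ j, f x = L j x) (hLg : ∀ x, ∃ j, g x = L j x)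
    (hf0 : ∀ x, 0 ≤ f x) (hfg : ∀ x, f x = 0 → g x = 0) [Finite ι]
    (hP : IsCompact (polyhedron D)) (hPK : polyhedron D ⊆ K)
    (htot : ∀ i j, (∀ v ∈ polyhedron D, L i v ≤ L j v) ∨ ∀ v ∈ polyhedron D, L j v ≤ L i v) :
    ∃ m : ℕ, ∀ x : K, (x : E) ∈ polyhedron D → g x ≤ m * f x := by
  set S : Set K := {x | (x : E) ∈ polyhedron D}
  rcases S.eq_empty_or_nonempty with hS | hS
  · exact ⟨0, fun x hx => (eq_empty_iff_forall_notMem.1 hS x hx).elim⟩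
  have htotS : ∀ i j, (∀ z ∈ S, L i z ≤ L j z) ∨ ∀ z ∈ S, L j z ≤ L i z := fun i j =>
    (htot i j).imp (fun h z hz => h z hz) fun h z hz => h z hz
  obtain ⟨a, ha⟩ := hK.exists_eq_affine_on_of_total hf L hLf hS htotS
  obtain ⟨b, hb⟩ := hK.exists_eq_affine_on_of_total hg L hLg hS htotS
  obtain ⟨m, hm⟩ := exists_nat_le_mul_on_polyhedron hP (A := L a) (B := L b)
    (fun v hv => ha ⟨v, hPK hv⟩ hv ▸ hf0 _)
    (fun v hv h0 => by rw [← hb ⟨v, hPK hv⟩ hv, hfg _ (by rw [ha _ hv]; exact h0)])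
  exact ⟨m, fun x hx => by rw [ha x hx, hb x hx]; exact hm x hx⟩

theorem exists_nat_le_mul_of_zero_subset [Finite ι] {K : Set E} (hK : K = polyhedron D)
    (hKc : IsCompact K) {f g : K → ℝ} (hf : IsPiecewiseAffine f) (hg : IsPiecewiseAffine g)
    (hf0 : ∀ x, 0 ≤ f x) (hfg : ∀ x, f x = 0 → g x = 0) : ∃ m : ℕ, ∀ x, g x ≤ m * f x := by
  subst hK
  obtain ⟨hfc, k, Lf, hLf⟩ := hf
  obtain ⟨hgc, l, Lg, hLg⟩ := hg
  set L := Sum.elim Lf Lg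
  let cell (s : Set ((Fin k ⊕ Fin l) × (Fin k ⊕ Fin l))) : Set E :=
    polyhedron (Sum.elim D fun p : s => L p.1.1 - L p.1.2)
  have hcell : ∀ s v, v ∈ cell s ↔ v ∈ polyhedron D ∧ ∀ p ∈ s, L p.1 v ≤ L p.2 v := by
    simp [cell, polyhedron_sumElim]
  let pattern (x : polyhedron D) : Set ((Fin k ⊕ Fin l) × (Fin k ⊕ Fin l)) :=
    {p | L p.1 x ≤ L p.2 x}
  refine exists_nat_le_mul_of_forall_fiber pattern hf0 fun s => ?_
  by_cases hs : ∃ x₀, pattern x₀ = s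
  swap
  · exact ⟨0, fun x hx => (hs ⟨x, hx⟩).elim⟩
  obtain ⟨x₀, rfl⟩ := hs
  have hsub : cell (pattern x₀) ⊆ polyhedron D := fun v hv => ((hcell _ v).1 hv).1
  have htot : ∀ i j, (∀ v ∈ cell (pattern x₀), L i v ≤ L j v) ∨
      ∀ v ∈ cell (pattern x₀), L j v ≤ L i v := fun i j => by
    by_cases h : L i x₀ ≤ L j x₀
    · exact .inl fun v hv => ((hcell _ v).1 hv).2 (i, j) h
    · exact .inr fun v hv => ((hcell _ v).1 hv).2 (j, i) (le_of_not_ge h)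
  obtain ⟨m, hm⟩ := (convex_polyhedron D).exists_nat_le_mul_on_polyhedron_of_total hfc hgc L
    (fun x => let ⟨j, hj⟩ := hLf x; ⟨.inl j, hj⟩) (fun x => let ⟨j, hj⟩ := hLg x; ⟨.inr j, hj⟩)
    hf0 hfg (hKc.of_isClosed_subset (isClosed_polyhedron _) hsub) hsub htot
  exact ⟨m, fun x hx => hm x ((hcell _ x).2 ⟨x.2, fun p hp => (hx ▸ hp : p ∈ pattern x)⟩)⟩

end NormedPolyhedron

section DMV

variable {n : ℕ}

def ratAffine (n : ℕ) : ℚ × (Fin n → ℚ) →+ (Cube n → ℝ) where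
  toFun p x := p.1 + ∑ i, (p.2 i : ℝ) * (x : Fin n → ℝ) i
  map_zero' := by ext; simp
  map_add' p q := by ext x; simp [Finset.sum_add_distrib, add_mul]; ring

theorem ratAffine_apply (p : ℚ × (Fin n → ℚ)) (x : Cube n) :
    ratAffine n p x = p.1 + ∑ i, (p.2 i : ℝ) * (x : Fin n → ℝ) i :=
  rfl

def IsRatPiecewiseAffine (h : Cube n → ℝ) : Prop :=
  ∃ s : Finset (ℚ × (Fin n → ℚ)), ∀ x, ∃ p ∈ s, h x = ratAffine n p x

theorem isPWLQ_iff {f : Cube n → ℝ} :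
    IsPWLQ f ↔ Continuous f ∧ (∀ x, 0 ≤ f x ∧ f x ≤ 1) ∧ IsRatPiecewiseAffine f := by
  refine and_congr_right' (and_congr_right' ⟨?_, ?_⟩)
  · rintro ⟨k, c, a, h⟩
    refine ⟨Finset.univ.image fun j => (c j, a j), fun x => ?_⟩
    obtain ⟨j, hj⟩ := h x
    exact ⟨(c j, a j), Finset.mem_image_of_mem _ (Finset.mem_univ j), hj⟩
  · rintro ⟨s, h⟩
    refine ⟨s.card, fun j => (s.equivFin.symm j).1.1, fun j => (s.equivFin.symm j).1.2,
      fun x => ?_⟩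
    obtain ⟨p, hp, hpx⟩ := h x
    exact ⟨s.equivFin ⟨p, hp⟩, by simpa [ratAffine_apply] using hpx⟩

namespace IsRatPiecewiseAffine

theorem const (c : ℚ) : IsRatPiecewiseAffine fun _ : Cube n => (c : ℝ) :=
  ⟨{(c, 0)}, fun x => ⟨_, Finset.mem_singleton_self _, by simp [ratAffine_apply]⟩⟩

variable {h₁ h₂ : Cube n → ℝ}

theorem add (H₁ : IsRatPiecewiseAffine h₁) (H₂ : IsRatPiecewiseAffine h₂) :
    IsRatPiecewiseAffine fun x => h₁ x + h₂ x := by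
  obtain ⟨s₁, hs₁⟩ := H₁
  obtain ⟨s₂, hs₂⟩ := H₂
  refine ⟨s₁ + s₂, fun x => ?_⟩
  obtain ⟨p₁, hp₁, e₁⟩ := hs₁ x
  obtain ⟨p₂, hp₂, e₂⟩ := hs₂ x
  exact ⟨p₁ + p₂, Finset.add_mem_add hp₁ hp₂, by simp [e₁, e₂]⟩

theorem sub (H₁ : IsRatPiecewiseAffine h₁) (H₂ : IsRatPiecewiseAffine h₂) :
    IsRatPiecewiseAffine fun x => h₁ x - h₂ x := by
  obtain ⟨s₁, hs₁⟩ := H₁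
  obtain ⟨s₂, hs₂⟩ := H₂
  refine ⟨s₁ - s₂, fun x => ?_⟩
  obtain ⟨p₁, hp₁, e₁⟩ := hs₁ x
  obtain ⟨p₂, hp₂, e₂⟩ := hs₂ x
  exact ⟨p₁ - p₂, Finset.sub_mem_sub hp₁ hp₂, by simp [e₁, e₂]⟩

theorem of_forall_eq_or_eq (H₁ : IsRatPiecewiseAffine h₁) (H₂ : IsRatPiecewiseAffine h₂)
    {h : Cube n → ℝ} (hh : ∀ x, h x = h₁ x ∨ h x = h₂ x) : IsRatPiecewiseAffine h := by
  classical
  obtain ⟨s₁, hs₁⟩ := H₁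
  obtain ⟨s₂, hs₂⟩ := H₂
  refine ⟨s₁ ∪ s₂, fun x => ?_⟩
  rcases hh x with h | h <;> rw [h]
  · obtain ⟨p, hp, e⟩ := hs₁ x; exact ⟨p, Finset.mem_union_left _ hp, e⟩
  · obtain ⟨p, hp, e⟩ := hs₂ x; exact ⟨p, Finset.mem_union_right _ hp, e⟩

theorem min (H₁ : IsRatPiecewiseAffine h₁) (H₂ : IsRatPiecewiseAffine h₂) :
    IsRatPiecewiseAffine fun x => min (h₁ x) (h₂ x) :=
  H₁.of_forall_eq_or_eq H₂ fun _ => min_choice _ _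

theorem max (H₁ : IsRatPiecewiseAffine h₁) (H₂ : IsRatPiecewiseAffine h₂) :
    IsRatPiecewiseAffine fun x => max (h₁ x) (h₂ x) :=
  H₁.of_forall_eq_or_eq H₂ fun _ => max_choice _ _

end IsRatPiecewiseAffine

theorem isPWLQ_zero : IsPWLQ fun _ : Cube n => (0 : ℝ) :=
  isPWLQ_iff.2 ⟨continuous_const, fun _ => by norm_num, by
    simpa using IsRatPiecewiseAffine.const (n := n) 0⟩

theorem isPWLQ_one : IsPWLQ fun _ : Cube n => (1 : ℝ) :=
  isPWLQ_iff.2 ⟨continuous_const, fun _ => by norm_num, by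
    simpa using IsRatPiecewiseAffine.const (n := n) 1⟩

namespace IsPWLQ

variable {f g : Cube n → ℝ}

theorem nonneg (hf : IsPWLQ f) (x : Cube n) : 0 ≤ f x := (hf.2.1 x).1

theorem le_one (hf : IsPWLQ f) (x : Cube n) : f x ≤ 1 := (hf.2.1 x).2

theorem oplus (hf : IsPWLQ f) (hg : IsPWLQ g) : IsPWLQ fun x => min (f x + g x) 1 := by
  obtain ⟨hfc, -, hfr⟩ := isPWLQ_iff.1 hf
  obtain ⟨hgc, -, hgr⟩ := isPWLQ_iff.1 hg
  refine isPWLQ_iff.2 ⟨by fun_prop, fun x => ⟨?_, min_le_right _ _⟩, ?_⟩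
  · exact le_min (add_nonneg (hf.nonneg x) (hg.nonneg x)) zero_le_one
  · simpa using (hfr.add hgr).min (.const 1)

theorem ominus (hf : IsPWLQ f) (hg : IsPWLQ g) : IsPWLQ fun x => max (f x - g x) 0 := by
  obtain ⟨hfc, -, hfr⟩ := isPWLQ_iff.1 hf
  obtain ⟨hgc, -, hgr⟩ := isPWLQ_iff.1 hg
  refine isPWLQ_iff.2 ⟨by fun_prop, fun x => ⟨le_max_right _ _, ?_⟩, ?_⟩
  · exact max_le (by linarith [hf.le_one x, hg.nonneg x]) zero_le_one
  · simpa using (hfr.sub hgr).max (.const 0)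

theorem isPiecewiseAffine (hf : IsPWLQ f) : IsPiecewiseAffine f := by
  obtain ⟨hfc, -, k, c, a, h⟩ := hf
  refine ⟨hfc, k, fun j => AffineMap.const ℝ _ (c j : ℝ) +
    (∑ i, (a j i : ℝ) • (LinearMap.proj i : (Fin n → ℝ) →ₗ[ℝ] ℝ)).toAffineMap, fun x => ?_⟩
  obtain ⟨j, hj⟩ := h x
  exact ⟨j, by simp [hj]⟩

end IsPWLQ

def cubeFaces (n : ℕ) : Fin n ⊕ Fin n → (Fin n → ℝ) →ᵃ[ℝ] ℝ :=
  Sum.elim (fun i => -(LinearMap.proj i : (Fin n → ℝ) →ₗ[ℝ] ℝ).toAffineMap)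
    fun i => (LinearMap.proj i : (Fin n → ℝ) →ₗ[ℝ] ℝ).toAffineMap - AffineMap.const ℝ _ 1

theorem cube_eq_polyhedron : Cube n = polyhedron (cubeFaces n) := by
  ext x
  simp [Cube, cubeFaces, forall_and]

theorem isCompact_cube : IsCompact (Cube n) := by
  have : Cube n = Icc 0 1 := by ext; simp [Cube, Pi.le_def, forall_and]
  exact this ▸ isCompact_Icc

theorem IsPWLQ.exists_nat_le_mul_of_zero_subset {f g : Cube n → ℝ} (hf : IsPWLQ f)
    (hg : IsPWLQ g) (hfg : ∀ x, f x = 0 → g x = 0) : ∃ m : ℕ, ∀ x, g x ≤ m * f x :=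
  _root_.exists_nat_le_mul_of_zero_subset cube_eq_polyhedron isCompact_cube hf.isPiecewiseAffine
    hg.isPiecewiseAffine hf.nonneg hfg

theorem IsIdealQ.min_natCast_mul_mem {J : Set (Cube n → ℝ)} (hJ : IsIdealQ J) {f : Cube n → ℝ}
    (hf : f ∈ J) (m : ℕ) : (fun x => min (m * f x) 1) ∈ J := by
  induction m with
  | zero => simpa using hJ.2.1
  | succ m ih =>
    convert hJ.2.2.2 _ ih f hf using 2 with x
    have hfx := (hJ.1 f hf).nonneg x
    push_cast
    rcases le_total (m * f x) 1 with h | h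
    · rw [min_eq_left h, add_one_mul]
    · rw [min_eq_right h, min_eq_right (by linarith), min_eq_right (by nlinarith)]

theorem isIdealQ_setOf_le_natCast_mul (f : Cube n → ℝ) :
    IsIdealQ {g | IsPWLQ g ∧ ∃ m : ℕ, ∀ x, g x ≤ m * f x} := by
  refine ⟨fun g hg => hg.1, ⟨isPWLQ_zero, 0, fun x => by simp⟩, ?_, ?_⟩
  · rintro g ⟨-, m, hm⟩ h hh hhg
    exact ⟨hh, m, fun x => (hhg x).trans (hm x)⟩
  · rintro g ⟨hg, m, hm⟩ h ⟨hh, l, hl⟩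
    refine ⟨hg.oplus hh, m + l, fun x => (min_le_left _ _).trans ?_⟩
    push_cast
    linarith [hm x, hl x]

theorem memGen_iff {f g : Cube n → ℝ} (hf : IsPWLQ f) :
    memGen f g ↔ IsPWLQ g ∧ ∃ m : ℕ, ∀ x, g x ≤ m * f x := by
  refine ⟨fun hfg => hfg _ (isIdealQ_setOf_le_natCast_mul f) ⟨hf, 1, fun x => by simp⟩, ?_⟩
  rintro ⟨hg, m, hm⟩ J hJ hfJ
  exact hJ.2.2.1 _ (hJ.min_natCast_mul_mem hfJ m) g hg fun x => le_min (hm x) (hg.le_one x)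

theorem memGen_of_zero_subset {f g : Cube n → ℝ} (hf : IsPWLQ f) (hg : IsPWLQ g)
    (hfg : ∀ x, f x = 0 → g x = 0) : memGen f g :=
  (memGen_iff hf).2 ⟨hg, hf.exists_nat_le_mul_of_zero_subset hg hfg⟩

def pointIdeal (x : Cube n) : Set (Cube n → ℝ) := {h | IsPWLQ h ∧ h x = 0}

theorem isIdealQ_pointIdeal (x : Cube n) : IsIdealQ (pointIdeal x) := by
  refine ⟨fun h hh => hh.1, ⟨isPWLQ_zero, rfl⟩, ?_, ?_⟩
  · rintro h ⟨-, hx⟩ g hg hgh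
    exact ⟨hg, le_antisymm (hx ▸ hgh x) (hg.nonneg x)⟩
  · rintro g ⟨hg, hgx⟩ h ⟨hh, hhx⟩
    exact ⟨hg.oplus hh, by simp [hgx, hhx]⟩

theorem IsIdealQ.mem_of_pointIdeal_subset {J : Set (Cube n → ℝ)} (hJ : IsIdealQ J) {x : Cube n}
    (hxJ : pointIdeal x ⊆ J) {h : Cube n → ℝ} (hh : h ∈ J) (hhx : h x ≠ 0) {w : Cube n → ℝ}
    (hw : IsPWLQ w) : w ∈ J := by
  have hpos : 0 < h x := ((hJ.1 h hh).nonneg x).lt_of_ne' hhx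
  obtain ⟨m, hm⟩ := exists_nat_gt (1 / h x)
  set G := fun y => min (m * h y) 1
  have hG : G ∈ J := hJ.min_natCast_mul_mem hh m
  have hGx : G x = 1 := min_eq_right (by rw [div_lt_iff₀ hpos] at hm; linarith)
  -- `w ≤ (w ⊖ G) ⊕ G`, and `w ⊖ G` vanishes at `x` because `G x = 1`.
  have hwG : (fun y => max (w y - G y) 0) ∈ J :=
    hxJ ⟨hw.ominus (hJ.1 G hG), by simp [hGx, hw.le_one x]⟩
  exact hJ.2.2.1 _ (hJ.2.2.2 _ hwG G hG) w hw fun y =>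
    le_min (by linarith [le_max_left (w y - G y) 0]) (hw.le_one y)

theorem isMaxIdealQ_pointIdeal (x : Cube n) : IsMaxIdealQ (pointIdeal x) := by
  refine ⟨isIdealQ_pointIdeal x, ⟨_, isPWLQ_one, fun h => one_ne_zero h.2⟩, ?_⟩
  rintro J hJ ⟨w, hw, hwJ⟩ hxJ
  refine Subset.antisymm (fun h hh => ⟨hJ.1 h hh, ?_⟩) hxJ
  by_contra hhx
  exact hwJ (hJ.mem_of_pointIdeal_subset hxJ hh hhx hw)

end DMV

/-- Every principal ideal `J = (f]` of `DMV_n` is an intersection of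
maximal ideals; equivalently, `J = I(V(J))`. -/
theorem principal_ideal_intersection_of_maximals (n : ℕ) (f : Cube n → ℝ)
    (hf : IsPWLQ f) :
    -- `(f]` is an intersection of maximal ideals
    (∃ S : Set (Set (Cube n → ℝ)), (∀ M ∈ S, IsMaxIdealQ M) ∧
      ∀ g : Cube n → ℝ, memGen f g ↔ (IsPWLQ g ∧ ∀ M ∈ S, g ∈ M)) ∧
    -- equivalently, `(f] = I(V((f]))`
    (∀ g : Cube n → ℝ, IsPWLQ g →
      (memGen f g ↔ ∀ x : Cube n, (∀ h : Cube n → ℝ, memGen f h → h x = 0) → g x = 0)) := by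
  refine ⟨⟨{M | ∃ x, f x = 0 ∧ M = pointIdeal x}, ?_, fun g => ⟨fun hfg => ?_, ?_⟩⟩,
    fun g hg => ⟨fun hfg x hx => hx g hfg, fun H => ?_⟩⟩
  · rintro _ ⟨x, -, rfl⟩
    exact isMaxIdealQ_pointIdeal x
  · obtain ⟨hg, m, hm⟩ := (memGen_iff hf).1 hfg
    refine ⟨hg, ?_⟩
    rintro _ ⟨x, hx, rfl⟩
    exact ⟨hg, le_antisymm (by simpa [hx] using hm x) (hg.nonneg x)⟩
  · rintro ⟨hg, hM⟩
    exact memGen_of_zero_subset hf hg fun x hx => (hM _ ⟨x, hx, rfl⟩).2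
  · exact memGen_of_zero_subset hf hg fun x hx =>
      H x fun h hfh => (hfh _ (isIdealQ_pointIdeal x) ⟨hf, hx⟩).2
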